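/- arXiv:2405.16461 — 4 statements merged into one kernel-verified Lean document; each statement's English description precedes it below -/
import Mathlib

section
/- Let q, x_1, …, x_d be points in ℝ^d with the x_i distinct from q, and set u_i = q - x_i for i = 1,…,d. Suppose the d-th standard basis vector e_d lies in the interior of the conical hull Cone(u_1,…,u_d). Then for every hyperplane H of ℝ^d containing q but not containing q + e_d, at least one of the points x_1,…,x_d lies strictly on the opposite side of H from q + e_d. -/
open EuclideanSpace

/-! Pairing the normal `f` of the hyperplane with `e_d = ∑ bᵢ (q - xᵢ)` gives
`⟪f, e_d⟫² = ∑ bᵢ ⟪f, q - xᵢ⟫ ⟪f, e_d⟫ > 0`, so some `⟪f, q - xᵢ⟫` has the sign of `⟪f, e_d⟫`,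
i.e. `xᵢ` lies strictly on the other side of the hyperplane from `q + e_d`. -/

theorem Finset.exists_mul_sum_pos_of_sum_ne_zero {ι : Type*} (s : Finset ι) {b c : ι → ℝ}
    (hb : ∀ i ∈ s, 0 ≤ b i) (hs : ∑ i ∈ s, b i * c i ≠ 0) :
    ∃ i ∈ s, 0 < c i * ∑ j ∈ s, b j * c j := by
  set S := ∑ j ∈ s, b j * c j
  have hsum : ∑ _i ∈ s, (0 : ℝ) < ∑ i ∈ s, b i * (c i * S) := by
    calc ∑ _i ∈ s, (0 : ℝ) = 0 := Finset.sum_const_zero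
      _ < S * S := mul_self_pos.mpr hs
      _ = ∑ i ∈ s, b i * (c i * S) := by
        rw [Finset.sum_mul]
        exact Finset.sum_congr rfl fun i _ => by ring
  obtain ⟨i, hi, hpos⟩ := Finset.exists_lt_of_sum_lt hsum
  exact ⟨i, hi, pos_of_mul_pos_right hpos (hb i hi)⟩

theorem exists_inner_mul_inner_pos_of_eq_sum_smul {E ι : Type*} [NormedAddCommGroup E]
    [InnerProductSpace ℝ E] [Fintype ι] {v f : E} {w : ι → E} {b : ι → ℝ}
    (hb : ∀ i, 0 ≤ b i) (hv : v = ∑ i, b i • w i) (hfv : inner ℝ f v ≠ (0 : ℝ)) :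
    ∃ i, 0 < inner ℝ f (w i) * inner ℝ f v := by
  have hexpand : inner ℝ f v = ∑ i, b i * inner ℝ f (w i) := by
    simp only [hv, inner_sum, real_inner_smul_right]
  rw [hexpand] at hfv ⊢
  obtain ⟨i, -, hi⟩ := Finset.univ.exists_mul_sum_pos_of_sum_ne_zero (fun i _ => hb i) hfv
  exact ⟨i, hi⟩

/-- If `e_d` lies in the interior of the conical hull of the vectors `q - x i`
(i.e. it is a strictly positive combination of them), then any hyperplane through `q`
not containing `q + e_d` (with normal `f`, so `⟪f, e_d⟫ ≠ 0`) has at least one `x i`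
strictly on the opposite side from `q + e_d`. -/
theorem stmt_1 (d : ℕ) (hd : 1 ≤ d)
    (q : EuclideanSpace ℝ (Fin d)) (x : Fin d → EuclideanSpace ℝ (Fin d))
    (b : Fin d → ℝ) (hb : ∀ i, 0 < b i)
    (hcone : (EuclideanSpace.single (Fin.last (d - 1) |>.cast (by omega)) (1 : ℝ)) =
      ∑ i, b i • (q - x i))
    (f : EuclideanSpace ℝ (Fin d))
    (hfe : inner ℝ f (EuclideanSpace.single (Fin.last (d - 1) |>.cast (by omega)) (1 : ℝ))
      ≠ (0 : ℝ)) :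
    ∃ i, inner ℝ f (x i - q) *
      inner ℝ f (EuclideanSpace.single (Fin.last (d - 1) |>.cast (by omega)) (1 : ℝ)) < (0 : ℝ) := by
  obtain ⟨i, hi⟩ := exists_inner_mul_inner_pos_of_eq_sum_smul (fun i => (hb i).le) hcone hfe
  refine ⟨i, ?_⟩
  rw [← neg_sub q (x i), inner_neg_right, neg_mul]
  exact neg_neg_of_pos hi
end

section
/- Let q, x_1, …, x_d be points in ℝ^d, and set u_i = q - x_i. Suppose e_d lies in the interior of Cone(u_1,…,u_d), written as e_d = Σ b_i u_i with all b_i > 0. If H is a hyperplane containing both q and q + e_d such that all points of {x_1,…,x_d} \ H lie (weakly) on one side of H, then x_1,…,x_d all lie in H. -/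
open Finset

theorem Finset.eq_zero_of_sum_mul_eq_zero_of_pos_of_nonpos {ι : Type*} {s : Finset ι}
    {b a : ι → ℝ} (hb : ∀ i ∈ s, 0 < b i) (ha : ∀ i ∈ s, a i ≤ 0)
    (hsum : ∑ i ∈ s, b i * a i = 0) : ∀ i ∈ s, a i = 0 := by
  intro i hi
  have hterm : b i * a i = 0 :=
    (sum_eq_zero_iff_of_nonpos fun j hj => mul_nonpos_of_nonneg_of_nonpos (hb j hj).le (ha j hj)).mp
      hsum i hi
  exact (mul_eq_zero.mp hterm).resolve_left (hb i hi).ne'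

theorem inner_sub_eq_zero_of_inner_sum_smul_sub_eq_zero {E ι : Type*} [NormedAddCommGroup E]
    [InnerProductSpace ℝ E] [Fintype ι] {q f : E} {x : ι → E} {b : ι → ℝ} (hb : ∀ i, 0 < b i)
    (horth : inner ℝ f (∑ i, b i • (q - x i)) = (0 : ℝ))
    (hside : ∀ i, inner ℝ f (x i - q) ≤ (0 : ℝ)) :
    ∀ i, inner ℝ f (x i - q) = (0 : ℝ) := by
  have hsum : ∑ i, b i * inner ℝ f (x i - q) = 0 := by
    have hneg : ∀ i, inner ℝ f (q - x i) = -inner ℝ f (x i - q) := fun i => by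
      rw [← inner_neg_right, neg_sub]
    simpa [inner_sum, real_inner_smul_right, hneg] using horth
  intro i
  exact eq_zero_of_sum_mul_eq_zero_of_pos_of_nonpos (fun j _ => hb j) (fun j _ => hside j) hsum
    i (mem_univ i)

/-- If `e_d = ∑ b i • (q - x i)` with all `b i > 0`, and `H` is a hyperplane (with unit
normal `f`) containing both `q` and `q + e_d` such that all the `x i` lie weakly on one
side of `H`, then all `x i` lie in `H`. -/
theorem stmt_2 (d : ℕ) (hd : 1 ≤ d)
    (q : EuclideanSpace ℝ (Fin d)) (x : Fin d → EuclideanSpace ℝ (Fin d))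
    (b : Fin d → ℝ) (hb : ∀ i, 0 < b i)
    (hcone : (EuclideanSpace.single (⟨d - 1, by omega⟩ : Fin d) (1 : ℝ)) =
      ∑ i, b i • (q - x i))
    (f : EuclideanSpace ℝ (Fin d))
    (hfe : inner ℝ f (EuclideanSpace.single (⟨d - 1, by omega⟩ : Fin d) (1 : ℝ)) = (0 : ℝ))
    (hside : ∀ i, inner ℝ f (x i - q) ≤ (0 : ℝ)) :
    ∀ i, inner ℝ f (x i - q) = (0 : ℝ) :=
  inner_sub_eq_zero_of_inner_sum_smul_sub_eq_zero hb (hcone ▸ hfe) hside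
end

section
/- Fix a_1, …, a_{d+1} ∈ (0,∞). For Lebesgue-almost all (x_1,…,x_{d+1}) ∈ (ℝ^d)^{d+1}, the intersection ∩_{i=1}^{d+1} ∂B(x_i, a_i) is empty. -/
/-!
For almost every choice of the first `d` centres they are affinely independent: inductively, each
new centre only has to avoid the affine span of the previous ones, a proper affine subspace and
hence a null set. Two points at the same distances from affinely independent `y 1, …, y d` differ
by a vector orthogonal to their `(d - 1)`-dimensional vector span, so the points at prescribed
distances from them lie on a line and on a sphere: there are at most two. The last centre must
then lie on one of finitely many spheres of radius `a (d + 1)`, a null set, and Fubini concludes.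
-/

open Metric MeasureTheory Set Module EuclideanGeometry

theorem IsSigmaCompact.measurableSet {X : Type*} [TopologicalSpace X] [T2Space X]
    [MeasurableSpace X] [OpensMeasurableSpace X] {s : Set X} (hs : IsSigmaCompact s) :
    MeasurableSet s := by
  obtain ⟨K, hK, rfl⟩ := hs
  exact .iUnion fun n => (hK n).isClosed.measurableSet

theorem isSigmaCompact_setOf_iInter_sphere_nonempty {X ι : Type*} [MetricSpace X] [ProperSpace X]
    [Finite ι] (r : ι → ℝ) : IsSigmaCompact {x : ι → X | (⋂ i, sphere (x i) (r i)).Nonempty} := by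
  have hclosed : IsClosed {q : (ι → X) × X | ∀ i, dist q.2 (q.1 i) = r i} := by
    simp only [ofPred_forall]
    exact isClosed_iInter fun i => isClosed_eq (by fun_prop) continuous_const
  convert (isSigmaCompact_univ.of_isClosed_subset hclosed (subset_univ _)).image continuous_fst
  ext x
  simp [Set.Nonempty]

theorem MeasureTheory.Measure.ae_pi_of_ae_ae_snoc {α : Type*} [MeasurableSpace α] (μ : Measure α)
    [SigmaFinite μ] {k : ℕ} {p : (Fin (k + 1) → α) → Prop} (hp : MeasurableSet {x | p x})
    (h : ∀ᵐ y ∂(Measure.pi fun _ : Fin k => μ), ∀ᵐ z ∂μ, p (Fin.snoc y z)) :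
    ∀ᵐ x ∂(Measure.pi fun _ => μ), p x := by
  have hmp := measurePreserving_piFinSuccAbove (fun _ => μ) (Fin.last k)
  set e := MeasurableEquiv.piFinSuccAbove (fun _ : Fin (k + 1) => α) (Fin.last k)
  have he_symm : ∀ z y, e.symm (z, y) = Fin.snoc y z := fun z y =>
    Fin.insertNth_last' z y
  have hp' : MeasurableSet {w : α × (Fin k → α) | p (e.symm (w.1, w.2))} :=
    e.symm.measurable hp
  have h_prod : ∀ᵐ w ∂μ.prod (Measure.pi fun _ : Fin k => μ), p (e.symm w) :=
    (Measure.ae_prod_iff_ae_ae hp').2 <| (Measure.ae_ae_comm hp').2 <| by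
      simpa only [he_symm] using h
  exact (hmp.quasiMeasurePreserving.ae h_prod).mono fun x hx => by
    simpa only [e.symm_apply_apply] using hx

section AffineIndependent

variable {k V P : Type*} [DivisionRing k] [AddCommGroup V] [Module k V] [AddTorsor V P]

theorem AffineIndependent.snoc {n : ℕ} {y : Fin n → P} (hy : AffineIndependent k y) {z : P}
    (hz : z ∉ affineSpan k (range y)) : AffineIndependent k (Fin.snoc y z : Fin (n + 1) → P) := by
  let f : {j : Fin (n + 1) // j ≠ Fin.last n} ↪ Fin n :=
    ⟨fun j => j.1.castPred j.2, fun _ _ h => Subtype.ext (Fin.castPred_inj.1 h)⟩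
  have hcast : ∀ j : {j // j ≠ Fin.last n}, (Fin.snoc y z : Fin (n + 1) → P) j = y (f j) :=
    fun j => by
      show _ = y (j.1.castPred j.2)
      rw [← Fin.snoc_castSucc (α := fun _ => P) z y, Fin.castSucc_castPred]
  refine .affineIndependent_of_notMem_span (i := Fin.last n) ?_ ?_
  · convert hy.comp_embedding f using 1
    exact funext hcast
  · rw [Fin.snoc_last]
    refine fun h => hz (affineSpan_mono k ?_ h)
    rintro _ ⟨j, hj, rfl⟩
    exact ⟨f ⟨j, hj⟩, (hcast (Subtype.mk j hj)).symm⟩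

end AffineIndependent

section Haar

variable {E : Type*} [NormedAddCommGroup E] [NormedSpace ℝ E] [FiniteDimensional ℝ E]
  [MeasurableSpace E] [BorelSpace E] (μ : Measure E) [μ.IsAddHaarMeasure]

theorem ae_affineIndependent_pi {k : ℕ} (hk : k ≤ finrank ℝ E + 1) :
    ∀ᵐ y ∂(Measure.pi fun _ : Fin k => μ), AffineIndependent ℝ y := by
  induction k with
  | zero => exact ae_of_all _ fun y => affineIndependent_of_subsingleton ℝ y
  | succ k ih =>
    refine Measure.ae_pi_of_ae_ae_snoc μ
      (isOpen_setOfPred_affineIndependent (𝕜 := ℝ)).measurableSet ?_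
    filter_upwards [ih (by omega)] with y hy
    have hspan : affineSpan ℝ (range y) ≠ ⊤ := fun h => by
      have := hy.affineSpan_eq_top_iff_card_eq_finrank_add_one.1 h
      simp only [Fintype.card_fin] at this
      omega
    filter_upwards [measure_eq_zero_iff_ae_notMem.1 (Measure.addHaar_affineSubspace μ _ hspan)]
      with z hz
    exact hy.snoc hz

end Haar

section Euclidean

variable {V P : Type*} [NormedAddCommGroup V] [InnerProductSpace ℝ V] [MetricSpace P]
  [NormedAddTorsor V P]

theorem vsub_mem_orthogonal_vectorSpan_of_forall_dist_eq {s : Set P} {p q : P}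
    (hs : ∀ c ∈ s, dist p c = dist q c) : q -ᵥ p ∈ (vectorSpan ℝ s)ᗮ := by
  have hle : vectorSpan ℝ s ≤ (ℝ ∙ (q -ᵥ p))ᗮ := by
    rw [← AffineSubspace.direction_perpBisector, ← direction_affineSpan]
    exact AffineSubspace.direction_le <| affineSpan_le.2 fun c hc =>
      AffineSubspace.mem_perpBisector_iff_dist_eq'.2 (hs c hc)
  exact Submodule.orthogonal_le hle <|
    Submodule.le_orthogonal_orthogonal _ (Submodule.mem_span_singleton_self _)

theorem AffineIndependent.finite_setOf_forall_dist_eq [FiniteDimensional ℝ V] {n : ℕ}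
    (hV : finrank ℝ V = n + 1) {y : Fin (n + 1) → P} (hy : AffineIndependent ℝ y)
    (r : Fin (n + 1) → ℝ) : {w | ∀ i, dist w (y i) = r i}.Finite := by
  set S := {w | ∀ i, dist w (y i) = r i}
  rcases S.eq_empty_or_nonempty with hS | ⟨p, hp⟩
  · exact hS ▸ finite_empty
  set W := vectorSpan ℝ (range y)
  have hWperp : finrank ℝ Wᗮ = 1 := by
    have := W.finrank_add_finrank_orthogonal
    rw [hy.finrank_vectorSpan (n := n) (by simp), hV] at this
    omega
  obtain ⟨v, hvW, hv0⟩ := Submodule.exists_mem_ne_zero_of_ne_bot (p := Wᗮ) fun h => by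
    rw [h, finrank_bot] at hWperp
    omega
  have hline : Wᗮ = ℝ ∙ v := eq_span_singleton_of_mem_of_finrank_eq_one hWperp hvW hv0
  set s : Sphere P := ⟨y 0, r 0⟩
  refine (toFinite {p, s.secondInter p v}).subset fun w hw => ?_
  have hmem : w ∈ AffineSubspace.mk' p (ℝ ∙ v) := by
    rw [AffineSubspace.mem_mk', ← hline]
    refine vsub_mem_orthogonal_vectorSpan_of_forall_dist_eq ?_
    rintro _ ⟨i, rfl⟩
    rw [hp i, hw i]
  exact (s.eq_or_eq_secondInter_of_mem_mk'_span_singleton_iff_mem (hp 0) hmem).2 (hw 0)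

end Euclidean

theorem stmt_6_general (d : ℕ) (hd : 1 ≤ d) (a : Fin (d + 1) → ℝ) :
    ∀ᵐ x ∂(volume : Measure (Fin (d + 1) → EuclideanSpace ℝ (Fin d))),
      (⋂ i, sphere (x i) (a i)) = ∅ := by
  obtain ⟨n, rfl⟩ : ∃ n, d = n + 1 := ⟨d - 1, by omega⟩
  have hmeas : MeasurableSet
      {x : Fin (n + 1 + 1) → EuclideanSpace ℝ (Fin (n + 1)) | (⋂ i, sphere (x i) (a i)) = ∅} := by
    simpa only [compl_ofPred, not_nonempty_iff_eq_empty] using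
      (isSigmaCompact_setOf_iInter_sphere_nonempty a).measurableSet.compl
  refine Measure.ae_pi_of_ae_ae_snoc volume hmeas ?_
  filter_upwards [ae_affineIndependent_pi volume (k := n + 1) (by simp)] with y hy
  have hfin := hy.finite_setOf_forall_dist_eq (by simp) (fun i => a i.castSucc)
  have hnull := (measure_biUnion_null_iff hfin.countable).2 fun w _ =>
    Measure.addHaar_sphere volume w (a (Fin.last _))
  filter_upwards [measure_eq_zero_iff_ae_notMem.1 hnull] with z hz
  refine eq_empty_iff_forall_notMem.2 fun w hw => hz ?_
  rw [mem_iInter, Fin.forall_fin_succ'] at hw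
  simp only [Fin.snoc_castSucc, Fin.snoc_last, Metric.mem_sphere] at hw
  exact mem_biUnion (x := w) hw.1 (by rw [Metric.mem_sphere, dist_comm]; exact hw.2)

/-- For fixed positive radii `a 1, …, a (d+1)`, for Lebesgue-almost all tuples of centres
`(x 1, …, x (d+1))` in `(ℝ^d)^{d+1}`, the intersection of the `d+1` spheres
`∂B(x i, a i)` is empty. -/
theorem stmt_6 (d : ℕ) (hd : 1 ≤ d) (a : Fin (d + 1) → ℝ) (ha : ∀ i, 0 < a i) :
    ∀ᵐ x ∂(volume : Measure (Fin (d + 1) → EuclideanSpace ℝ (Fin d))),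
      (⋂ i, sphere (x i) (a i)) = ∅ :=
  stmt_6_general d hd a
end

section
/- Let d ≥ 1, a > 0, r > 0 and x, y ∈ ℝ^d with ‖y - x‖ ≤ (a/2) r. Then λ_d(B(y, ar) \ B(x, ar)) ≥ θ_{d-1} (a/2)^{d-1} r^{d-1} ‖y - x‖. -/
/-!
Translating and rotating, one may take `x = 0` and `y = (h, 0)` in `ℝ × V` with the `L²` norm,
where `h = ‖y - x‖`. Over each point `v` of the ball of radius `ρ` in `V`, the lune contains the
segment `(√(R² - ‖v‖²), √(R² - ‖v‖²) + h]` in the first coordinate, as long as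
`ρ² + h² ≤ R²`; Fubini then bounds the volume of the lune below by `h · vol(ball ρ)`.
-/

open Metric MeasureTheory Module Set WithLp

theorem ofReal_mul_le_volume_prod_of_Ioc_subset {β : Type*} [MeasurableSpace β]
    (ν : Measure β) [SFinite ν] {S : Set (ℝ × β)} (hS : MeasurableSet S) {W : Set β}
    (hW : MeasurableSet W) {h : ℝ}
    (hsec : ∀ v ∈ W, ∃ c, Ioc c (c + h) ⊆ (fun s ↦ (s, v)) ⁻¹' S) :
    ENNReal.ofReal h * ν W ≤ (volume.prod ν) S := by
  rw [Measure.prod_apply_symm hS, ← setLIntegral_const]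
  refine (setLIntegral_mono' hW fun v hv ↦ ?_).trans (setLIntegral_le_lintegral _ _)
  obtain ⟨c, hc⟩ := hsec v hv
  calc ENNReal.ofReal h = volume (Ioc c (c + h)) := by rw [Real.volume_Ioc, add_sub_cancel_left]
    _ ≤ _ := measure_mono hc

theorem sq_sub_add_le_and_lt_sq_add {q h R s : ℝ} (hh : 0 ≤ h)
    (hqhR : q + h ^ 2 ≤ R ^ 2) (hs : s ∈ Ioc √(R ^ 2 - q) (√(R ^ 2 - q) + h)) :
    (s - h) ^ 2 + q ≤ R ^ 2 ∧ R ^ 2 < s ^ 2 + q := by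
  have hc : √(R ^ 2 - q) ^ 2 = R ^ 2 - q := Real.sq_sqrt (by nlinarith)
  have hhc : h ≤ √(R ^ 2 - q) := Real.le_sqrt_of_sq_le (by linarith)
  obtain ⟨hlo, hhi⟩ := hs
  constructor <;> nlinarith [Real.sqrt_nonneg (R ^ 2 - q)]

section Lune

variable {E : Type*} [NormedAddCommGroup E] [InnerProductSpace ℝ E] [FiniteDimensional ℝ E]
  [MeasurableSpace E] [BorelSpace E]

theorem volume_closedBall_diff_closedBall_congr {x y x' y' : E} (h : ‖y - x‖ = ‖y' - x'‖)
    (R : ℝ) :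
    volume (closedBall y R \ closedBall x R) = volume (closedBall y' R \ closedBall x' R) := by
  have translate : ∀ x y : E,
      volume (closedBall y R \ closedBall x R) = volume (closedBall (y - x) R \ closedBall 0 R) := by
    intro x y
    rw [← measure_preimage_add volume x, preimage_sdiff, preimage_add_closedBall,
      preimage_add_closedBall, sub_self]
  let e : E ≃ₗᵢ[ℝ] E := Submodule.reflection (ℝ ∙ ((y' - x') - (y - x)))ᗮ
  have he : e (y' - x') = y - x := Submodule.reflection_sub h.symm
  rw [translate, translate x', ← e.measurePreserving.measure_preimage
    (measurableSet_closedBall.diff measurableSet_closedBall).nullMeasurableSet,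
    preimage_sdiff, e.preimage_closedBall, e.preimage_closedBall, map_zero, ← he,
    e.symm_apply_apply]

variable {V : Type*} [NormedAddCommGroup V] [InnerProductSpace ℝ V] [FiniteDimensional ℝ V]
  [MeasurableSpace V] [BorelSpace V]

theorem ofReal_mul_volume_ball_le_volume_closedBall_toLp_diff_closedBall {h ρ R : ℝ} (hh : 0 ≤ h)
    (hR : 0 ≤ R) (hρhR : ρ ^ 2 + h ^ 2 ≤ R ^ 2) :
    ENNReal.ofReal h * volume (ball (0 : V) ρ)
      ≤ volume (closedBall (toLp 2 ((h, 0) : ℝ × V)) R \ closedBall 0 R) := by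
  have hS : MeasurableSet (closedBall (toLp 2 ((h, 0) : ℝ × V)) R \ closedBall 0 R) :=
    measurableSet_closedBall.diff measurableSet_closedBall
  rw [← (WithLp.volume_preserving_toLp ℝ V).measure_preimage hS.nullMeasurableSet,
    Measure.volume_eq_prod]
  refine ofReal_mul_le_volume_prod_of_Ioc_subset volume
    (hS.preimage (measurable_toLp 2 _)) measurableSet_ball fun v hv ↦
      ⟨√(R ^ 2 - ‖v‖ ^ 2), fun s hs ↦ ?_⟩
  have hv : ‖v‖ ^ 2 < ρ ^ 2 := by
    rw [mem_ball_zero_iff] at hv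
    exact pow_lt_pow_left₀ hv (norm_nonneg v) two_ne_zero
  obtain ⟨hnear, hfar⟩ := sq_sub_add_le_and_lt_sq_add hh (by linarith) hs
  simp only [mem_preimage, mem_sdiff, mem_closedBall, dist_eq_norm, sub_zero, not_le]
  rw [← toLp_sub, Prod.mk_sub_mk, sub_zero, ← sq_le_sq₀ (norm_nonneg _) hR,
    ← sq_lt_sq₀ hR (norm_nonneg _), prod_norm_sq_eq_of_L2, prod_norm_sq_eq_of_L2]
  simp only [Real.norm_eq_abs, sq_abs]
  exact ⟨hnear, hfar⟩

theorem ofReal_norm_sub_mul_volume_ball_le_volume_closedBall_diff_closedBall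
    (hfin : finrank ℝ E = finrank ℝ V + 1) (x y : E) {ρ R : ℝ} (hR : 0 ≤ R)
    (hρR : ρ ^ 2 + ‖y - x‖ ^ 2 ≤ R ^ 2) :
    ENNReal.ofReal ‖y - x‖ * volume (ball (0 : V) ρ)
      ≤ volume (closedBall y R \ closedBall x R) := by
  have hfin' : finrank ℝ E = finrank ℝ (WithLp 2 (ℝ × V)) := by
    rw [hfin, (WithLp.linearEquiv 2 ℝ (ℝ × V)).finrank_eq, finrank_prod, finrank_self, add_comm]
  let φ : E ≃ₗᵢ[ℝ] WithLp 2 (ℝ × V) :=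
    (stdOrthonormalBasis ℝ E).equiv (stdOrthonormalBasis ℝ _) (finCongr hfin')
  have hφ : volume (closedBall y R \ closedBall x R)
      = volume (closedBall (φ y) R \ closedBall (φ x) R) := by
    rw [← φ.measurePreserving.measure_preimage
      (measurableSet_closedBall.diff measurableSet_closedBall).nullMeasurableSet,
      preimage_sdiff, φ.preimage_closedBall, φ.preimage_closedBall, φ.symm_apply_apply,
      φ.symm_apply_apply]
  have hnorm : ‖φ y - φ x‖ = ‖toLp 2 ((‖y - x‖, 0) : ℝ × V) - 0‖ := by
    rw [← map_sub, φ.norm_map, sub_zero, ← sq_eq_sq₀ (norm_nonneg _) (norm_nonneg _),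
      prod_norm_sq_eq_of_L2]
    simp
  rw [hφ, volume_closedBall_diff_closedBall_congr hnorm]
  exact ofReal_mul_volume_ball_le_volume_closedBall_toLp_diff_closedBall (norm_nonneg _) hR hρR

end Lune

/-- If `‖y - x‖ ≤ (a/2) r` then the volume of the lune `B(y,ar) \ B(x,ar)` is at least
`θ_{d-1} (a/2)^{d-1} r^{d-1} ‖y - x‖`. -/
theorem stmt_9 (d : ℕ) (hd : 1 ≤ d) (a r : ℝ) (ha : 0 < a) (hr : 0 < r)
    (x y : EuclideanSpace ℝ (Fin d)) (hxy : ‖y - x‖ ≤ (a / 2) * r) :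
    ENNReal.ofReal
        ((volume (ball (0 : EuclideanSpace ℝ (Fin (d - 1))) 1)).toReal *
          (a / 2) ^ (d - 1) * r ^ (d - 1) * ‖y - x‖)
      ≤ volume (closedBall y (a * r) \ closedBall x (a * r)) := by
  obtain ⟨n, rfl⟩ : ∃ n, d = n + 1 := ⟨d - 1, by omega⟩
  rw [Nat.add_sub_cancel]
  have hρ : 0 < a / 2 * r := by positivity
  have hρR : (a / 2 * r) ^ 2 + ‖y - x‖ ^ 2 ≤ (a * r) ^ 2 := by
    nlinarith [norm_nonneg (y - x)]
  have key := ofReal_norm_sub_mul_volume_ball_le_volume_closedBall_diff_closedBall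
    (V := EuclideanSpace ℝ (Fin n)) (by simp) x y (by positivity) hρR
  rw [Measure.addHaar_ball_of_pos _ _ hρ, finrank_euclideanSpace_fin] at key
  refine le_of_eq_of_le ?_ key
  set θ := volume (ball (0 : EuclideanSpace ℝ (Fin n)) 1)
  rw [show θ.toReal * (a / 2) ^ n * r ^ n * ‖y - x‖ = ‖y - x‖ * ((a / 2 * r) ^ n * θ.toReal) by
      ring, ENNReal.ofReal_mul (norm_nonneg _), ENNReal.ofReal_mul (by positivity),
    ENNReal.ofReal_toReal measure_ball_lt_top.ne]
end
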